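/- Let M > 0, k ∈ (−1,1), and η ∈ (0,π/2). Define S : [0,∞)² → ℝ by S(u,v) = √(2√2/M)·[ (cos²η/(2√(1+k)))·( U√(1+U²) + log(U + √(1+U²)) ) + (sin²η/(2√(1−k)))·( V√(1+V²) + log(V + √(1+V²)) ) ], where U = √(1+k)·u/cos η and V = √(1−k)·v/sin η. Then for all u,v ≥ 0, (∂S/∂u)² + (∂S/∂v)² = (2√2/M)·(1 + (1+k)u² + (1−k)v²); equivalently, S solves the eikonal equation |∇S| = 1 for the conformal metric g_Σ = (2√2/M)(1+(1+k)u²+(1−k)v²)(du²+dv²). In fact ∂S/∂u = √(2√2/M)·√(cos²η + (1+k)u²) and ∂S/∂v = √(2√2/M)·√(sin²η + (1−k)v²). -/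

import Mathlib

open Real

/-- The separated distance function `S_η` of the generalized Taub-NUT polytope metric,
in adapted quadratic coordinates. -/
noncomputable def Sdist (M k η : ℝ) (u v : ℝ) : ℝ :=
  let U := Real.sqrt (1 + k) * u / Real.cos η
  let V := Real.sqrt (1 - k) * v / Real.sin η
  Real.sqrt (2 * Real.sqrt 2 / M) *
    ((Real.cos η ^ 2 / (2 * Real.sqrt (1 + k))) *
        (U * Real.sqrt (1 + U ^ 2) + Real.log (U + Real.sqrt (1 + U ^ 2))) +
     (Real.sin η ^ 2 / (2 * Real.sqrt (1 - k))) *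
        (V * Real.sqrt (1 + V ^ 2) + Real.log (V + Real.sqrt (1 + V ^ 2))))

/-!
The logarithms in `S` are `arsinh U` and `arsinh V`, and `U √(1 + U²) + arsinh U` has
derivative `2 √(1 + U²)`. After the substitution `U = √b t / c`, each summand of `S` is
therefore a primitive of `t ↦ √(c² + b t²)`, with `(b, c) = (1 + k, cos η)` in `u` and
`(1 - k, sin η)` in `v`. Since `S` separates, the squares of its partial derivatives add up,
via `cos² η + sin² η = 1`, to the conformal factor of `g_Σ`.
-/

lemma hasDerivAt_mul_sqrt_one_add_sq_add_arsinh (x : ℝ) :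
    HasDerivAt (fun x => x * √(1 + x ^ 2) + arsinh x) (2 * √(1 + x ^ 2)) x := by
  have hpos : 0 < 1 + x ^ 2 := by positivity
  have hsqrt : HasDerivAt (fun x => √(1 + x ^ 2)) (2 * x / (2 * √(1 + x ^ 2))) x :=
    (((hasDerivAt_pow 2 x).const_add 1).congr_deriv (by ring)).sqrt hpos.ne'
  refine (((hasDerivAt_id' x).mul hsqrt).add (hasDerivAt_arsinh x)).congr_deriv ?_
  have hsq : √(1 + x ^ 2) ^ 2 = 1 + x ^ 2 := sq_sqrt hpos.le
  field_simp
  linear_combination -hsq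

noncomputable def sqrtQuadPrimitive (b c t : ℝ) : ℝ :=
  c ^ 2 / (2 * √b) * (√b * t / c * √(1 + (√b * t / c) ^ 2) + arsinh (√b * t / c))

lemma hasDerivAt_sqrtQuadPrimitive {b c : ℝ} (hb : 0 < b) (hc : 0 < c) (t : ℝ) :
    HasDerivAt (sqrtQuadPrimitive b c) (√(c ^ 2 + b * t ^ 2)) t := by
  have hsubst : HasDerivAt (fun t => √b * t / c) (√b / c) t := by
    simpa using ((hasDerivAt_id t).const_mul √b).div_const c
  refine (((hasDerivAt_mul_sqrt_one_add_sq_add_arsinh _).comp t hsubst).const_mul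
    (c ^ 2 / (2 * √b))).congr_deriv ?_
  have hscale : √(c ^ 2 + b * t ^ 2) = c * √(1 + (√b * t / c) ^ 2) := by
    have hfactor : c ^ 2 + b * t ^ 2 = c ^ 2 * (1 + (√b * t / c) ^ 2) := by
      field_simp
      rw [sq_sqrt hb.le]
      ring
    rw [hfactor, sqrt_mul (sq_nonneg c), sqrt_sq hc.le]
  rw [hscale]
  field_simp

lemma Sdist_eq (M k η u v : ℝ) :
    Sdist M k η u v = √(2 * √2 / M) *
      (sqrtQuadPrimitive (1 + k) (cos η) u + sqrtQuadPrimitive (1 - k) (sin η) v) :=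
  rfl

/-- `S_η` solves the eikonal equation `|∇S| = 1` for the generalized Taub-NUT polytope
metric `g_Σ = (2√2/M)(1+(1+k)u²+(1-k)v²)(du²+dv²)` on the first quadrant; in fact its
partial derivatives are computed explicitly. -/
theorem stmt_3 (M k η : ℝ) (hM : 0 < M) (hk : k ∈ Set.Ioo (-1 : ℝ) 1)
    (hη : η ∈ Set.Ioo 0 (Real.pi / 2)) :
    ∀ u v : ℝ, 0 ≤ u → 0 ≤ v →
      deriv (fun t => Sdist M k η t v) u
        = Real.sqrt (2 * Real.sqrt 2 / M) * Real.sqrt (Real.cos η ^ 2 + (1 + k) * u ^ 2) ∧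
      deriv (fun t => Sdist M k η u t) v
        = Real.sqrt (2 * Real.sqrt 2 / M) * Real.sqrt (Real.sin η ^ 2 + (1 - k) * v ^ 2) ∧
      (deriv (fun t => Sdist M k η t v) u) ^ 2 + (deriv (fun t => Sdist M k η u t) v) ^ 2
        = (2 * Real.sqrt 2 / M) * (1 + (1 + k) * u ^ 2 + (1 - k) * v ^ 2) := by
  intro u v _ _
  obtain ⟨hk₁, hk₂⟩ := hk
  obtain ⟨hη₁, hη₂⟩ := hη
  have hcos : 0 < cos η := cos_pos_of_mem_Ioo ⟨by linarith [pi_pos], hη₂⟩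
  have hsin : 0 < sin η := sin_pos_of_pos_of_lt_pi hη₁ (by linarith [pi_pos])
  have hdu :
      deriv (fun t => Sdist M k η t v) u = √(2 * √2 / M) * √(cos η ^ 2 + (1 + k) * u ^ 2) := by
    simp only [Sdist_eq]
    exact (((hasDerivAt_sqrtQuadPrimitive (by linarith) hcos u).add_const _).const_mul _).deriv
  have hdv :
      deriv (fun t => Sdist M k η u t) v = √(2 * √2 / M) * √(sin η ^ 2 + (1 - k) * v ^ 2) := by
    simp only [Sdist_eq]
    exact (((hasDerivAt_sqrtQuadPrimitive (by linarith) hsin v).const_add _).const_mul _).deriv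
  refine ⟨hdu, hdv, ?_⟩
  have hA : 0 ≤ 2 * √2 / M := by positivity
  rw [hdu, hdv, mul_pow, mul_pow, sq_sqrt hA, sq_sqrt (by nlinarith), sq_sqrt (by nlinarith)]
  linear_combination (2 * √2 / M) * sin_sq_add_cos_sq η
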